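/- arXiv:2309.11110 — 3 statements merged into one kernel-verified Lean document; each statement's English description precedes it below -/
import Mathlib

section
/- Let h : ℝ² → ℝ satisfy the symmetry h(x,y)=h(y,x) and the strict monotone condition (h3): ξ₁<ξ₂ and η₁<η₂ imply h(ξ₁,η₁)+h(ξ₂,η₂) < h(ξ₁,η₂)+h(ξ₂,η₁). Let x = (x_i)_{i=0}^n be a finite configuration with x_{m-1} < x_{m+2} and x_m > x_{m+1} for some m with 1 ≤ m ≤ n-2. Then x is not minimal: there exists a configuration y with the same endpoints y_{m-1}=x_{m-1}, y_{m+2}=x_{m+2} such that the total action h(y_{m-1},y_m)+h(y_m,y_{m+1})+h(y_{m+1},y_{m+2}) is strictly smaller than h(x_{m-1},x_m)+h(x_m,x_{m+1})+h(x_{m+1},x_{m+2}). -/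
/- Swapping the two out-of-order middle points lowers the action: the twist condition (h3),
applied to the crossing pairs `x_{m+1} < x_m` and `x_{m-1} < x_{m+2}`, is exactly this
inequality once `h` is symmetrised. -/

theorem action_swap_lt_of_twist (h : ℝ → ℝ → ℝ) (hsym : ∀ x y : ℝ, h x y = h y x)
    (h3 : ∀ ξ₁ ξ₂ η₁ η₂ : ℝ, ξ₁ < ξ₂ → η₁ < η₂ →
      h ξ₁ η₁ + h ξ₂ η₂ < h ξ₁ η₂ + h ξ₂ η₁)
    {a b c d : ℝ} (had : a < d) (hcb : c < b) :
    h a c + h c b + h b d < h a b + h b c + h c d := by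
  have twist := h3 c b a d hcb had
  rw [hsym c a, hsym b a] at twist
  linarith [hsym b c]

theorem not_minimal_of_nonmonotone_general
    (h : ℝ → ℝ → ℝ)
    (hsym : ∀ x y : ℝ, h x y = h y x)
    (h3 : ∀ ξ₁ ξ₂ η₁ η₂ : ℝ, ξ₁ < ξ₂ → η₁ < η₂ →
      h ξ₁ η₁ + h ξ₂ η₂ < h ξ₁ η₂ + h ξ₂ η₁)
    (m : ℕ) (x : ℕ → ℝ)
    (hm1 : 1 ≤ m)
    (hlt : x (m - 1) < x (m + 2)) (hgt : x (m + 1) < x m) :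
    ∃ y : ℕ → ℝ, y (m - 1) = x (m - 1) ∧ y (m + 2) = x (m + 2) ∧
      h (y (m - 1)) (y m) + h (y m) (y (m + 1)) + h (y (m + 1)) (y (m + 2)) <
      h (x (m - 1)) (x m) + h (x m) (x (m + 1)) + h (x (m + 1)) (x (m + 2)) := by
  have swap_left : Equiv.swap m (m + 1) (m - 1) = m - 1 :=
    Equiv.swap_apply_of_ne_of_ne (by omega) (by omega)
  have swap_right : Equiv.swap m (m + 1) (m + 2) = m + 2 :=
    Equiv.swap_apply_of_ne_of_ne (by omega) (by omega)
  refine ⟨x ∘ Equiv.swap m (m + 1), by simp only [Function.comp, swap_left],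
    by simp only [Function.comp, swap_right], ?_⟩
  simp only [Function.comp, swap_left, swap_right, Equiv.swap_apply_left,
    Equiv.swap_apply_right]
  exact action_swap_lt_of_twist h hsym h3 hlt hgt

/-- Almost-monotonicity: if `x_{m-1} < x_{m+2}` and `x_m > x_{m+1}`, then the
configuration is not minimal: some configuration with the same endpoints has
strictly smaller three-step action. -/
theorem not_minimal_of_nonmonotone
    (h : ℝ → ℝ → ℝ)
    (hcont : Continuous fun p : ℝ × ℝ => h p.1 p.2)
    (hsym : ∀ x y : ℝ, h x y = h y x)
    (h3 : ∀ ξ₁ ξ₂ η₁ η₂ : ℝ, ξ₁ < ξ₂ → η₁ < η₂ →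
      h ξ₁ η₁ + h ξ₂ η₂ < h ξ₁ η₂ + h ξ₂ η₁)
    (n m : ℕ) (x : ℕ → ℝ)
    (hm1 : 1 ≤ m) (hm2 : m + 2 ≤ n)
    (hlt : x (m - 1) < x (m + 2)) (hgt : x (m + 1) < x m) :
    ∃ y : ℕ → ℝ, y (m - 1) = x (m - 1) ∧ y (m + 2) = x (m + 2) ∧
      h (y (m - 1)) (y m) + h (y m) (y (m + 1)) + h (y (m + 1)) (y (m + 2)) <
      h (x (m - 1)) (x m) + h (x m) (x (m + 1)) + h (x (m + 1)) (x (m + 2)) :=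
  not_minimal_of_nonmonotone_general h hsym h3 m x hm1 hlt hgt
end

section
/- Suppose h is Lipschitz in each variable with constant C on [u⁰,u¹]², c = h(u⁰,u⁰), and a_i(x) = h(x_i,x_{i+1}) − c. Let x = (x_i)_{i=0}^n with x_i ∈ [u⁰,u¹], x_0 = a, x_n = b, a,b ∈ [u⁰,u⁰+r] achieve the minimum C(n;a,b) of the action among such configurations. Then Σ_{i=0}^{n-1} a_i(x) ≤ C(|a−u⁰| + |b−u⁰|), via comparison with the configuration y given by y_0=a, y_n=b, y_i=u⁰ otherwise. -/
/-!
Compare the minimizer with the configuration that sits at `u⁰` except at its two endpoints.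
Splitting `h ξ η - h u⁰ u⁰ = (h ξ η - h u⁰ η) + (h u⁰ η - h u⁰ u⁰)`, each bond of a configuration
costs at most `C (|ξ - u⁰| + |η - u⁰|)` above `c`; for the comparison configuration only the
endpoints deviate from `u⁰`, so the bound over all bonds adds up to `C (|a - u⁰| + |b - u⁰|)`.
-/

open Finset

theorem sub_le_of_lipschitz_in_each_var {h : ℝ → ℝ → ℝ} {s : Set ℝ} {C : ℝ}
    (hlip1 : ∀ ξ η₁ η₂ : ℝ, ξ ∈ s → η₁ ∈ s → η₂ ∈ s → |h ξ η₁ - h ξ η₂| ≤ C * |η₁ - η₂|)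
    (hlip2 : ∀ ξ₁ ξ₂ η : ℝ, ξ₁ ∈ s → ξ₂ ∈ s → η ∈ s → |h ξ₁ η - h ξ₂ η| ≤ C * |ξ₁ - ξ₂|)
    {ξ η u : ℝ} (hξ : ξ ∈ s) (hη : η ∈ s) (hu : u ∈ s) :
    h ξ η - h u u ≤ C * |ξ - u| + C * |η - u| :=
  calc h ξ η - h u u = (h ξ η - h u η) + (h u η - h u u) := by ring
    _ ≤ |h ξ η - h u η| + |h u η - h u u| := add_le_add (le_abs_self _) (le_abs_self _)
    _ ≤ C * |ξ - u| + C * |η - u| := add_le_add (hlip2 ξ u η hξ hu hη) (hlip1 u η u hu hη hu)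

theorem sum_range_add_succ_eq_of_eq_zero {M : Type*} [AddCommMonoid M] {f : ℕ → M} {n : ℕ}
    (hn : 1 ≤ n) (hf : ∀ i, 0 < i → i < n → f i = 0) :
    ∑ i ∈ range n, (f i + f (i + 1)) = f 0 + f n := by
  rw [sum_add_distrib]
  congr 1
  · exact sum_eq_single 0 (fun i hi hi0 => hf i (Nat.pos_of_ne_zero hi0) (mem_range.1 hi))
      fun h0 => absurd (mem_range.2 hn) h0
  · have hf_succ : ∀ i ∈ range n, i ≠ n - 1 → f (i + 1) = 0 := fun i hi hin =>
      hf (i + 1) i.succ_pos (by have := mem_range.1 hi; omega)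
    rw [sum_eq_single (n - 1) hf_succ fun h0 => absurd (mem_range.2 (by omega)) h0,
      Nat.sub_add_cancel hn]

def endpointConfig {α : Type*} (a b u : α) (n : ℕ) : ℕ → α :=
  fun i => if i = 0 then a else if i = n then b else u

section endpointConfig

variable {α : Type*} {a b u : α} {n : ℕ}

@[simp]
theorem endpointConfig_zero : endpointConfig a b u n 0 = a := if_pos rfl

theorem endpointConfig_self (hn : n ≠ 0) : endpointConfig a b u n n = b := by
  simp [endpointConfig, hn]

theorem endpointConfig_of_pos_of_lt {i : ℕ} (hi0 : 0 < i) (hin : i < n) :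
    endpointConfig a b u n i = u := by
  simp [endpointConfig, hi0.ne', hin.ne]

theorem endpointConfig_mem {s : Set α} (ha : a ∈ s) (hb : b ∈ s) (hu : u ∈ s) (i : ℕ) :
    endpointConfig a b u n i ∈ s := by
  unfold endpointConfig
  split_ifs <;> assumption

end endpointConfig

theorem minimizer_action_upper_bound_general
    (h : ℝ → ℝ → ℝ) (u0 u1 C : ℝ)
    (hlip1 : ∀ ξ η₁ η₂ : ℝ, ξ ∈ Set.Icc u0 u1 → η₁ ∈ Set.Icc u0 u1 →
      η₂ ∈ Set.Icc u0 u1 → |h ξ η₁ - h ξ η₂| ≤ C * |η₁ - η₂|)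
    (hlip2 : ∀ ξ₁ ξ₂ η : ℝ, ξ₁ ∈ Set.Icc u0 u1 → ξ₂ ∈ Set.Icc u0 u1 →
      η ∈ Set.Icc u0 u1 → |h ξ₁ η - h ξ₂ η| ≤ C * |ξ₁ - ξ₂|)
    (c : ℝ) (hc : c = h u0 u0)
    (n : ℕ) (hn : 1 ≤ n)
    (a b : ℝ)
    (ha' : a ∈ Set.Icc u0 u1) (hb' : b ∈ Set.Icc u0 u1)
    (x : ℕ → ℝ)
    (hmin : ∀ y : ℕ → ℝ, (∀ i ≤ n, y i ∈ Set.Icc u0 u1) → y 0 = a → y n = b →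
      ∑ i ∈ Finset.range n, h (x i) (x (i + 1)) ≤
      ∑ i ∈ Finset.range n, h (y i) (y (i + 1))) :
    ∑ i ∈ Finset.range n, (h (x i) (x (i + 1)) - c) ≤
      C * (|a - u0| + |b - u0|) := by
  have hu0 : u0 ∈ Set.Icc u0 u1 := ⟨le_rfl, ha'.1.trans ha'.2⟩
  set y := endpointConfig a b u0 n
  have hy_mem (i : ℕ) : y i ∈ Set.Icc u0 u1 := endpointConfig_mem ha' hb' hu0 i
  have hy0 : y 0 = a := endpointConfig_zero
  have hyn : y n = b := endpointConfig_self (by omega)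
  subst hc
  calc ∑ i ∈ range n, (h (x i) (x (i + 1)) - h u0 u0)
      ≤ ∑ i ∈ range n, (h (y i) (y (i + 1)) - h u0 u0) := by
        simpa only [sum_sub_distrib] using
          sub_le_sub_right (hmin y (fun i _ => hy_mem i) hy0 hyn) _
    _ ≤ ∑ i ∈ range n, (C * |y i - u0| + C * |y (i + 1) - u0|) :=
        sum_le_sum fun i _ =>
          sub_le_of_lipschitz_in_each_var hlip1 hlip2 (hy_mem i) (hy_mem (i + 1)) hu0
    _ = C * |y 0 - u0| + C * |y n - u0| :=
        sum_range_add_succ_eq_of_eq_zero (f := fun i => C * |y i - u0|) hn fun i hi0 hin => by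
          simp [y, endpointConfig_of_pos_of_lt hi0 hin]
    _ = C * (|a - u0| + |b - u0|) := by rw [hy0, hyn, mul_add]

/-- Upper bound for the renormalized action of a minimizer with endpoints near `u⁰`:
comparison with the configuration that equals `u⁰` except at the endpoints gives
`Σ a_i(x) ≤ C(|a − u⁰| + |b − u⁰|)`. -/
theorem minimizer_action_upper_bound
    (h : ℝ → ℝ → ℝ) (u0 u1 C r : ℝ) (hu : u0 < u1) (hC : 0 < C)
    (hlip1 : ∀ ξ η₁ η₂ : ℝ, ξ ∈ Set.Icc u0 u1 → η₁ ∈ Set.Icc u0 u1 →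
      η₂ ∈ Set.Icc u0 u1 → |h ξ η₁ - h ξ η₂| ≤ C * |η₁ - η₂|)
    (hlip2 : ∀ ξ₁ ξ₂ η : ℝ, ξ₁ ∈ Set.Icc u0 u1 → ξ₂ ∈ Set.Icc u0 u1 →
      η ∈ Set.Icc u0 u1 → |h ξ₁ η - h ξ₂ η| ≤ C * |ξ₁ - ξ₂|)
    (c : ℝ) (hc : c = h u0 u0)
    (n : ℕ) (hn : 1 ≤ n)
    (a b : ℝ) (ha : a ∈ Set.Icc u0 (u0 + r)) (hb : b ∈ Set.Icc u0 (u0 + r))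
    (ha' : a ∈ Set.Icc u0 u1) (hb' : b ∈ Set.Icc u0 u1)
    (x : ℕ → ℝ) (hx : ∀ i ≤ n, x i ∈ Set.Icc u0 u1)
    (hx0 : x 0 = a) (hxn : x n = b)
    (hmin : ∀ y : ℕ → ℝ, (∀ i ≤ n, y i ∈ Set.Icc u0 u1) → y 0 = a → y n = b →
      ∑ i ∈ Finset.range n, h (x i) (x (i + 1)) ≤
      ∑ i ∈ Finset.range n, h (y i) (y (i + 1))) :
    ∑ i ∈ Finset.range n, (h (x i) (x (i + 1)) - c) ≤
      C * (|a - u0| + |b - u0|) :=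
  minimizer_action_upper_bound_general h u0 u1 C hlip1 hlip2 c hc n hn a b ha' hb' x hmin
end

section
/- Let x⁰ and x¹ be two strictly monotone configurations in X = [u⁰,u¹]^ℤ, with x⁰ increasing and x¹ decreasing, which cross exactly once. Define x⁺_i = max(x⁰_i, x¹_i) and x⁻_i = min(x⁰_i, x¹_i). If h satisfies (h3) (strict submodularity), then I(x⁰) + I(x¹) ≥ I(x⁺) + I(x⁻), where I(y) = Σ_{i∈ℤ}(h(y_i,y_{i+1}) − c), assuming all four sums converge. -/
/-! Strict submodularity of `h` gives, for every pair of bonds,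
`h (a ⊔ b) (a' ⊔ b') + h (a ⊓ b) (a' ⊓ b') ≤ h a a' + h b b'`: when the two configurations do not
cross between `i` and `i + 1` both sides agree, and when they do, this is (h3) itself.
Summing over `i` gives the inequality of the actions. -/

section Submodular

variable {α β : Type*} [LinearOrder α] [AddCommMonoid β] [PartialOrder β]

theorem submodular_of_strict {h : α → α → β}
    (h3 : ∀ ξ₁ ξ₂ η₁ η₂ : α, ξ₁ < ξ₂ → η₁ < η₂ → h ξ₁ η₁ + h ξ₂ η₂ < h ξ₁ η₂ + h ξ₂ η₁)
    {ξ₁ ξ₂ η₁ η₂ : α} (hξ : ξ₁ ≤ ξ₂) (hη : η₁ ≤ η₂) :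
    h ξ₁ η₁ + h ξ₂ η₂ ≤ h ξ₁ η₂ + h ξ₂ η₁ := by
  rcases hξ.eq_or_lt with rfl | hξ
  · exact (add_comm _ _).le
  rcases hη.eq_or_lt with rfl | hη
  · exact le_rfl
  exact (h3 ξ₁ ξ₂ η₁ η₂ hξ hη).le

theorem submodular_max_min {h : α → α → β}
    (hsub : ∀ ξ₁ ξ₂ η₁ η₂ : α, ξ₁ ≤ ξ₂ → η₁ ≤ η₂ → h ξ₁ η₁ + h ξ₂ η₂ ≤ h ξ₁ η₂ + h ξ₂ η₁)
    (a b a' b' : α) :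
    h (max a b) (max a' b') + h (min a b) (min a' b') ≤ h a a' + h b b' := by
  rcases le_total a b with hab | hba <;> rcases le_total a' b' with hab' | hba'
  · rw [max_eq_right hab, min_eq_left hab, max_eq_right hab', min_eq_left hab', add_comm]
  · rw [max_eq_right hab, min_eq_left hab, max_eq_left hba', min_eq_right hba', add_comm]
    exact hsub a b b' a' hab hba'
  · rw [max_eq_left hba, min_eq_right hba, max_eq_right hab', min_eq_left hab']
    simpa only [add_comm] using hsub b a a' b' hba hab'
  · rw [max_eq_left hba, min_eq_right hba, max_eq_left hba', min_eq_right hba']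

end Submodular

theorem cut_and_paste_general
    (h : ℝ → ℝ → ℝ)
    (h3 : ∀ ξ₁ ξ₂ η₁ η₂ : ℝ, ξ₁ < ξ₂ → η₁ < η₂ →
      h ξ₁ η₁ + h ξ₂ η₂ < h ξ₁ η₂ + h ξ₂ η₁)
    (c : ℝ)
    (x0 x1 : ℤ → ℝ)
    (hs0 : Summable fun i : ℤ => h (x0 i) (x0 (i + 1)) - c)
    (hs1 : Summable fun i : ℤ => h (x1 i) (x1 (i + 1)) - c)
    (hsp : Summable fun i : ℤ =>
      h (max (x0 i) (x1 i)) (max (x0 (i + 1)) (x1 (i + 1))) - c)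
    (hsm : Summable fun i : ℤ =>
      h (min (x0 i) (x1 i)) (min (x0 (i + 1)) (x1 (i + 1))) - c) :
    (∑' i : ℤ, (h (max (x0 i) (x1 i)) (max (x0 (i + 1)) (x1 (i + 1))) - c)) +
      (∑' i : ℤ, (h (min (x0 i) (x1 i)) (min (x0 (i + 1)) (x1 (i + 1))) - c)) ≤
    (∑' i : ℤ, (h (x0 i) (x0 (i + 1)) - c)) +
      (∑' i : ℤ, (h (x1 i) (x1 (i + 1)) - c)) := by
  rw [← hsp.tsum_add hsm, ← hs0.tsum_add hs1]
  refine (hsp.add hsm).tsum_le_tsum (fun i => ?_) (hs0.add hs1)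
  have := submodular_max_min (fun _ _ _ _ => submodular_of_strict h3)
    (x0 i) (x1 i) (x0 (i + 1)) (x1 (i + 1))
  linarith

/-- Cut-and-paste inequality: for a strictly increasing configuration `x⁰` and a
strictly decreasing configuration `x¹` crossing exactly once, with
`x⁺ = max(x⁰,x¹)` and `x⁻ = min(x⁰,x¹)`, condition (h3) gives
`I(x⁰) + I(x¹) ≥ I(x⁺) + I(x⁻)`. -/
theorem cut_and_paste
    (h : ℝ → ℝ → ℝ)
    (hcont : Continuous fun p : ℝ × ℝ => h p.1 p.2)
    (h3 : ∀ ξ₁ ξ₂ η₁ η₂ : ℝ, ξ₁ < ξ₂ → η₁ < η₂ →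
      h ξ₁ η₁ + h ξ₂ η₂ < h ξ₁ η₂ + h ξ₂ η₁)
    (u0 u1 c : ℝ) (hu : u0 < u1) (hc : c = h u0 u0)
    (x0 x1 : ℤ → ℝ)
    (hx0mem : ∀ i, x0 i ∈ Set.Icc u0 u1) (hx1mem : ∀ i, x1 i ∈ Set.Icc u0 u1)
    (hx0mono : ∀ i : ℤ, x0 i < x0 (i + 1))
    (hx1anti : ∀ i : ℤ, x1 (i + 1) < x1 i)
    (hcross : ∃ i₀ : ℤ, (∀ i ≤ i₀, x0 i ≤ x1 i) ∧ (∀ i : ℤ, i₀ < i → x1 i ≤ x0 i))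
    (hs0 : Summable fun i : ℤ => h (x0 i) (x0 (i + 1)) - c)
    (hs1 : Summable fun i : ℤ => h (x1 i) (x1 (i + 1)) - c)
    (hsp : Summable fun i : ℤ =>
      h (max (x0 i) (x1 i)) (max (x0 (i + 1)) (x1 (i + 1))) - c)
    (hsm : Summable fun i : ℤ =>
      h (min (x0 i) (x1 i)) (min (x0 (i + 1)) (x1 (i + 1))) - c) :
    (∑' i : ℤ, (h (max (x0 i) (x1 i)) (max (x0 (i + 1)) (x1 (i + 1))) - c)) +
      (∑' i : ℤ, (h (min (x0 i) (x1 i)) (min (x0 (i + 1)) (x1 (i + 1))) - c)) ≤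
    (∑' i : ℤ, (h (x0 i) (x0 (i + 1)) - c)) +
      (∑' i : ℤ, (h (x1 i) (x1 (i + 1)) - c)) :=
  cut_and_paste_general h h3 c x0 x1 hs0 hs1 hsp hsm
end
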